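/- One-step contraction of the mADBCD iteration: with notation as in the previous statement, define the next two iterates by x⁽ᵏ⁺¹⁾ = x⁽ᵏ⁾ + (ηₖᵀsₖ/‖Aηₖ‖²) ηₖ + β(x⁽ᵏ⁾ − x⁽ᵏ⁻¹⁾) where sₖ = Aᵀ(b − Ax⁽ᵏ⁾) ≠ 0 and β ≥ 0. Then ‖x⁽ᵏ⁺¹⁾ − x⋆‖²_{AᵀA} ≤ (1 + 3β + 2β² − (3β+1)|τₖ|σ_min(A)²/(n σ_max(A_{τₖ})²)) ‖x⁽ᵏ⁾ − x⋆‖²_{AᵀA} + (2β² + β) ‖x⁽ᵏ⁻¹⁾ − x⋆‖²_{AᵀA}. -/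

import Mathlib

open Matrix BigOperators

noncomputable def sqnorm {k : Type*} [Fintype k] (v : k → ℝ) : ℝ := ∑ i, v i ^ 2

noncomputable def enorm' {k : Type*} [Fintype k] (v : k → ℝ) : ℝ := Real.sqrt (sqnorm v)

noncomputable def sigmaMin {m n : Type*} [Fintype m] [Fintype n] (G : Matrix m n ℝ) : ℝ :=
  sInf {r | ∃ x : n → ℝ, enorm' x = 1 ∧ r = enorm' (G.mulVec x)}

noncomputable def sigmaMax {m n : Type*} [Fintype m] [Fintype n] (G : Matrix m n ℝ) : ℝ :=
  sSup {r | ∃ x : n → ℝ, enorm' x = 1 ∧ r = enorm' (G.mulVec x)}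

/-!
Write `E = A(xᵏ - x⋆)`, `F = A(xᵏ⁻¹ - x⋆)` and `w = Aηₖ`. Since `AᵀE = -sₖ`, the greedy step is
the exact line search of `E` along `w`: its residual `P = E - (E·w / ‖w‖²) w` satisfies
`P·E = ‖P‖² = ‖E‖² - (sₖ·ηₖ)² / ‖w‖²`. The gain is at least
`|τₖ| σ_min(A)² / (n σ_max(A_τₖ)²) ‖E‖²`, because `sₖ·ηₖ = ‖ηₖ‖² ≥ |τₖ| ‖sₖ‖² / n`,
`‖w‖² ≤ σ_max(A_τₖ)² ‖ηₖ‖²` and `‖sₖ‖² = ‖AᵀE‖² ≥ σ_min(A)² ‖E‖²`. Finally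
`A(xᵏ⁺¹ - x⋆) = P + β(E - F)`, and the momentum term is absorbed using `P·E = ‖P‖²`,
`-2 P·F ≤ ‖P‖² + ‖F‖²` and `‖E - F‖² ≤ 2‖E‖² + 2‖F‖²`.
-/

section SqNorm
variable {k : Type*} [Fintype k]

lemma sqnorm_eq_dotProduct (v : k → ℝ) : sqnorm v = v ⬝ᵥ v := by
  simp [sqnorm, dotProduct, sq]

lemma sqnorm_nonneg (v : k → ℝ) : 0 ≤ sqnorm v :=
  Finset.sum_nonneg fun _ _ => sq_nonneg _

lemma sqnorm_pos {v : k → ℝ} (hv : v ≠ 0) : 0 < sqnorm v := by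
  refine (sqnorm_nonneg v).lt_of_ne' ?_
  rwa [Ne, sqnorm_eq_dotProduct, dotProduct_self_eq_zero]

lemma sqnorm_smul (c : ℝ) (v : k → ℝ) : sqnorm (c • v) = c ^ 2 * sqnorm v := by
  simp [sqnorm, Finset.mul_sum, mul_pow]

lemma sqnorm_add (v w : k → ℝ) : sqnorm (v + w) = sqnorm v + 2 * (v ⬝ᵥ w) + sqnorm w := by
  simp only [sqnorm_eq_dotProduct, add_dotProduct, dotProduct_add, dotProduct_comm w v]
  ring

lemma sqnorm_sub (v w : k → ℝ) : sqnorm (v - w) = sqnorm v - 2 * (v ⬝ᵥ w) + sqnorm w := by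
  simp only [sqnorm_eq_dotProduct, sub_dotProduct, dotProduct_sub, dotProduct_comm w v]
  ring

lemma sq_dotProduct_le (v w : k → ℝ) : (v ⬝ᵥ w) ^ 2 ≤ sqnorm v * sqnorm w := by
  simpa [sqnorm, dotProduct] using Finset.sum_mul_sq_le_sq_mul_sq Finset.univ v w

lemma enorm'_nonneg (v : k → ℝ) : 0 ≤ enorm' v := Real.sqrt_nonneg _

lemma enorm'_sq (v : k → ℝ) : enorm' v ^ 2 = sqnorm v := Real.sq_sqrt (sqnorm_nonneg v)

lemma enorm'_smul (c : ℝ) (v : k → ℝ) : enorm' (c • v) = |c| * enorm' v := by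
  rw [enorm', sqnorm_smul, Real.sqrt_mul (sq_nonneg c), Real.sqrt_sq_eq_abs, enorm']

end SqNorm

section SingularValues
variable {p q : Type*} [Fintype p] [Fintype q] (G : Matrix p q ℝ)

lemma sigmaMin_nonneg : 0 ≤ sigmaMin G :=
  Real.sInf_nonneg (by rintro r ⟨y, -, rfl⟩; exact enorm'_nonneg _)

lemma sqnorm_mulVec_le_frobenius (x : q → ℝ) :
    sqnorm (G *ᵥ x) ≤ (∑ i, ∑ j, G i j ^ 2) * sqnorm x := by
  rw [Finset.sum_mul]
  refine Finset.sum_le_sum fun i _ => ?_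
  simpa [Matrix.mulVec, dotProduct, sqnorm] using
    Finset.sum_mul_sq_le_sq_mul_sq Finset.univ (fun j => G i j) x

lemma enorm'_mulVec_div_mem {x : q → ℝ} (hx : x ≠ 0) :
    enorm' (G *ᵥ x) / enorm' x ∈ {r | ∃ y : q → ℝ, enorm' y = 1 ∧ r = enorm' (G *ᵥ y)} := by
  have hx' : enorm' x ≠ 0 := Real.sqrt_ne_zero'.mpr (sqnorm_pos hx)
  refine ⟨(enorm' x)⁻¹ • x, ?_, ?_⟩
  · rw [enorm'_smul, abs_inv, abs_of_nonneg (enorm'_nonneg x), inv_mul_cancel₀ hx']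
  · rw [mulVec_smul, enorm'_smul, abs_inv, abs_of_nonneg (enorm'_nonneg x), inv_mul_eq_div]

lemma sq_sigmaMin_mul_sqnorm_le (x : q → ℝ) :
    sigmaMin G ^ 2 * sqnorm x ≤ sqnorm (G *ᵥ x) := by
  rcases eq_or_ne x 0 with rfl | hx
  · simp [sqnorm]
  have hle : sigmaMin G ≤ enorm' (G *ᵥ x) / enorm' x :=
    csInf_le ⟨0, by rintro r ⟨y, -, rfl⟩; exact enorm'_nonneg _⟩ (enorm'_mulVec_div_mem G hx)
  have := pow_le_pow_left₀ (sigmaMin_nonneg G) hle 2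
  rwa [div_pow, enorm'_sq, enorm'_sq, le_div_iff₀ (sqnorm_pos hx)] at this

lemma sqnorm_mulVec_le_sq_sigmaMax (x : q → ℝ) :
    sqnorm (G *ᵥ x) ≤ sigmaMax G ^ 2 * sqnorm x := by
  rcases eq_or_ne x 0 with rfl | hx
  · simp [sqnorm]
  have hbdd : BddAbove {r | ∃ y : q → ℝ, enorm' y = 1 ∧ r = enorm' (G *ᵥ y)} := by
    refine ⟨Real.sqrt (∑ i, ∑ j, G i j ^ 2), ?_⟩
    rintro r ⟨y, hy, rfl⟩
    have hy : sqnorm y = 1 := by rw [← enorm'_sq, hy, one_pow]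
    simpa [hy, enorm'] using Real.sqrt_le_sqrt (sqnorm_mulVec_le_frobenius G y)
  have hle : enorm' (G *ᵥ x) / enorm' x ≤ sigmaMax G := le_csSup hbdd (enorm'_mulVec_div_mem G hx)
  have := pow_le_pow_left₀ (div_nonneg (enorm'_nonneg _) (enorm'_nonneg _)) hle 2
  rwa [div_pow, enorm'_sq, enorm'_sq, div_le_iff₀ (sqnorm_pos hx)] at this

lemma sq_sigmaMin_mul_sqnorm_mulVec_le (e : q → ℝ) :
    sigmaMin G ^ 2 * sqnorm (G *ᵥ e) ≤ sqnorm (Gᵀ *ᵥ (G *ᵥ e)) := by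
  set r := Gᵀ *ᵥ (G *ᵥ e)
  have hcs : sqnorm (G *ᵥ e) ^ 2 ≤ sqnorm r * sqnorm e := by
    have hdot : sqnorm (G *ᵥ e) = r ⬝ᵥ e := by
      rw [sqnorm_eq_dotProduct, dotProduct_mulVec, ← mulVec_transpose]
    exact hdot ▸ sq_dotProduct_le r e
  have hmin := sq_sigmaMin_mul_sqnorm_le G e
  rcases (sqnorm_nonneg (G *ᵥ e)).eq_or_lt with h0 | hpos
  · rw [← h0, mul_zero]; exact sqnorm_nonneg r
  refine le_of_mul_le_mul_right ?_ hpos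
  calc sigmaMin G ^ 2 * sqnorm (G *ᵥ e) * sqnorm (G *ᵥ e)
      = sigmaMin G ^ 2 * sqnorm (G *ᵥ e) ^ 2 := by ring
    _ ≤ sigmaMin G ^ 2 * (sqnorm r * sqnorm e) := by gcongr
    _ = sqnorm r * (sigmaMin G ^ 2 * sqnorm e) := by ring
    _ ≤ sqnorm r * sqnorm (G *ᵥ e) := by gcongr; exact sqnorm_nonneg r

end SingularValues

section ExactLineSearch
variable {k : Type*} [Fintype k]

lemma sqnorm_sub_proj (u w : k → ℝ) :
    sqnorm (u - (u ⬝ᵥ w / sqnorm w) • w) = sqnorm u - (u ⬝ᵥ w) ^ 2 / sqnorm w := by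
  rw [sqnorm_sub, dotProduct_smul, sqnorm_smul, smul_eq_mul]
  rcases eq_or_ne (sqnorm w) 0 with h | h
  · simp [h]
  · field_simp
    ring

lemma dotProduct_sub_proj_self (u w : k → ℝ) :
    (u - (u ⬝ᵥ w / sqnorm w) • w) ⬝ᵥ u = sqnorm (u - (u ⬝ᵥ w / sqnorm w) • w) := by
  rw [sqnorm_sub_proj, sub_dotProduct, smul_dotProduct, smul_eq_mul, dotProduct_comm w u,
    ← sqnorm_eq_dotProduct]
  ring

lemma sqnorm_add_smul_sub_le {P E F : k → ℝ} (hPE : P ⬝ᵥ E = sqnorm P) {β : ℝ} (hβ : 0 ≤ β) :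
    sqnorm (P + β • (E - F)) ≤
      (1 + 3 * β) * sqnorm P + 2 * β ^ 2 * sqnorm E + (2 * β ^ 2 + β) * sqnorm F := by
  rw [sqnorm_add, dotProduct_smul, dotProduct_sub, hPE, sqnorm_smul, smul_eq_mul]
  have hPF : -(2 * (P ⬝ᵥ F)) ≤ sqnorm P + sqnorm F := by
    linarith [sqnorm_nonneg (P + F), sqnorm_add P F]
  have hEF : sqnorm (E - F) ≤ 2 * sqnorm E + 2 * sqnorm F := by
    linarith [sqnorm_nonneg (E + F), sqnorm_add E F, sqnorm_sub E F]
  nlinarith [mul_le_mul_of_nonneg_left hPF hβ, mul_le_mul_of_nonneg_left hEF (sq_nonneg β)]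

end ExactLineSearch

section GreedyBlock
variable {ι : Type*} (s : ι → ℝ) (τ : Finset ι)

lemma sqnorm_subtype_restrict : sqnorm (fun j : τ => s j) = ∑ j ∈ τ, s j ^ 2 :=
  Finset.sum_coe_sort τ fun j => s j ^ 2

variable [DecidableEq ι]

lemma sum_smul_single_apply (i : ι) :
    (∑ j ∈ τ, s j • (Pi.single j 1 : ι → ℝ)) i = if i ∈ τ then s i else 0 := by
  simp [Finset.sum_apply, Pi.single_apply]

variable [Fintype ι]

lemma dotProduct_sum_smul_single :
    s ⬝ᵥ ∑ j ∈ τ, s j • (Pi.single j 1 : ι → ℝ) = ∑ j ∈ τ, s j ^ 2 := by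
  simp only [dotProduct, sum_smul_single_apply, mul_ite, mul_zero, Finset.sum_ite_mem,
    Finset.univ_inter, sq]

lemma sqnorm_sum_smul_single :
    sqnorm (∑ j ∈ τ, s j • (Pi.single j 1 : ι → ℝ)) = ∑ j ∈ τ, s j ^ 2 := by
  rw [sqnorm_eq_dotProduct, ← dotProduct_sum_smul_single]
  simp only [dotProduct, sum_smul_single_apply, ite_mul, zero_mul, mul_ite, mul_zero]
  exact Finset.sum_congr rfl fun i _ => by split_ifs <;> rfl

lemma mulVec_sum_smul_single {m : Type*} (A : Matrix m ι ℝ) :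
    A *ᵥ ∑ j ∈ τ, s j • (Pi.single j 1 : ι → ℝ) =
      A.submatrix id (fun j : τ => (j : ι)) *ᵥ fun j => s j := by
  ext i
  simp only [mulVec, dotProduct, sum_smul_single_apply, mul_ite, mul_zero, Finset.sum_ite_mem,
    Finset.univ_inter, submatrix_apply, id]
  exact (Finset.sum_coe_sort τ fun j => A i j * s j).symm

lemma card_mul_sigma_ratio_mul_sqnorm_le {m : Type*} [Fintype m] (A : Matrix m ι ℝ)
    (e : ι → ℝ) (hs : Aᵀ *ᵥ (A *ᵥ e) = -s) {N : ℝ} (hN : 0 ≤ N)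
    (hτ : ∀ j ∈ τ, sqnorm s / N ≤ s j ^ 2) :
    (τ.card : ℝ) * sigmaMin A ^ 2 / (N * sigmaMax (A.submatrix id fun j : τ => (j : ι)) ^ 2) *
        sqnorm (A *ᵥ e) ≤
      (s ⬝ᵥ ∑ j ∈ τ, s j • (Pi.single j 1 : ι → ℝ)) ^ 2 /
        sqnorm (A *ᵥ ∑ j ∈ τ, s j • (Pi.single j 1 : ι → ℝ)) := by
  set η := ∑ j ∈ τ, s j • (Pi.single j 1 : ι → ℝ)
  set S := sigmaMax (A.submatrix id fun j : τ => (j : ι))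
  set t := ∑ j ∈ τ, s j ^ 2
  set Q := sqnorm (A *ᵥ η)
  have ht : 0 ≤ t := Finset.sum_nonneg fun _ _ => sq_nonneg _
  have hcard : (τ.card : ℝ) * (sqnorm s / N) ≤ t := by
    simpa using Finset.card_nsmul_le_sum τ (fun j => s j ^ 2) _ hτ
  have hsE : sigmaMin A ^ 2 * sqnorm (A *ᵥ e) ≤ sqnorm s := by
    simpa [hs, sqnorm] using sq_sigmaMin_mul_sqnorm_mulVec_le A e
  have hQS : Q ≤ S ^ 2 * t := by
    simpa [Q, η, mulVec_sum_smul_single, sqnorm_subtype_restrict] using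
      sqnorm_mulVec_le_sq_sigmaMax (A.submatrix id fun j : τ => (j : ι)) fun j => s j
  have hσQ : sigmaMin A ^ 2 * t ≤ Q := by
    simpa [η, sqnorm_sum_smul_single] using sq_sigmaMin_mul_sqnorm_le A η
  rw [dotProduct_sum_smul_single]
  rcases eq_or_ne (sigmaMin A) 0 with hσ | hσ
  · rw [hσ, zero_pow two_ne_zero, mul_zero, zero_div, zero_mul]
    exact div_nonneg (sq_nonneg t) (sqnorm_nonneg _)
  calc (τ.card : ℝ) * sigmaMin A ^ 2 / (N * S ^ 2) * sqnorm (A *ᵥ e)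
      = τ.card / N * (sigmaMin A ^ 2 * sqnorm (A *ᵥ e)) / S ^ 2 := by ring
    _ ≤ τ.card / N * sqnorm s / S ^ 2 := by gcongr
    _ = τ.card * (sqnorm s / N) / S ^ 2 := by ring
    _ ≤ t / S ^ 2 := by gcongr
    _ ≤ t ^ 2 / Q := by
      rcases (sqnorm_nonneg (A *ᵥ η)).eq_or_lt with hQ | hQ
      · -- `Q = 0` forces `t = 0`, and then both sides are `0` (division by zero)
        have : t = 0 := by nlinarith [sq_pos_of_ne_zero hσ]
        simp [this]
      have hS : 0 < S ^ 2 := by nlinarith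
      rw [div_le_div_iff₀ hS hQ]
      nlinarith

end GreedyBlock

theorem stmt_14_general {m n : ℕ} (A : Matrix (Fin m) (Fin n) ℝ)
    (b : Fin m → ℝ) (xstar : Fin n → ℝ)
    (hstar : (Aᵀ * A).mulVec xstar = Aᵀ.mulVec b)
    (β : ℝ) (hβ : 0 ≤ β) (xk xkm : Fin n → ℝ) :
    let sk : Fin n → ℝ := Aᵀ.mulVec (b - A.mulVec xk)
    let τk : Finset (Fin n) := Finset.univ.filter fun j => (sk j) ^ 2 ≥ sqnorm sk / n
    let ηk : Fin n → ℝ := ∑ j ∈ τk, sk j • (Pi.single j 1 : Fin n → ℝ)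
    let xkp : Fin n → ℝ := xk + (ηk ⬝ᵥ sk / sqnorm (A.mulVec ηk)) • ηk + β • (xk - xkm)
    let Aτ : Matrix (Fin m) ↥τk ℝ := A.submatrix id (fun j : ↥τk => (j : Fin n))
    sk ≠ 0 →
      sqnorm (A.mulVec (xkp - xstar)) ≤
        (1 + 3 * β + 2 * β ^ 2 -
            (3 * β + 1) * ((τk.card : ℝ) * sigmaMin A ^ 2 / (n * sigmaMax Aτ ^ 2))) *
          sqnorm (A.mulVec (xk - xstar)) +
        (2 * β ^ 2 + β) * sqnorm (A.mulVec (xkm - xstar)) := by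
  intro sk τk ηk xkp Aτ _
  set E := A *ᵥ (xk - xstar)
  set F := A *ᵥ (xkm - xstar)
  set w := A *ᵥ ηk
  set γ := (τk.card : ℝ) * sigmaMin A ^ 2 / (n * sigmaMax Aτ ^ 2)
  have hres : Aᵀ *ᵥ E = -sk := by
    simp only [E, sk, mulVec_mulVec, mulVec_sub, hstar, neg_sub]
  have hEw : E ⬝ᵥ w = -(ηk ⬝ᵥ sk) := by
    rw [dotProduct_mulVec, ← mulVec_transpose, hres, neg_dotProduct, dotProduct_comm]
  set P := E - (E ⬝ᵥ w / sqnorm w) • w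
  have hstep : A *ᵥ (xkp - xstar) = P + β • (E - F) := by
    have hα : ηk ⬝ᵥ sk / sqnorm w = -(E ⬝ᵥ w / sqnorm w) := by rw [hEw, neg_div, neg_neg]
    have : xkp - xstar = (xk - xstar) - (E ⬝ᵥ w / sqnorm w) • ηk +
        β • ((xk - xstar) - (xkm - xstar)) := by
      change xk + (ηk ⬝ᵥ sk / sqnorm w) • ηk + β • (xk - xkm) - xstar = _
      rw [hα, neg_smul]
      module
    rw [this, mulVec_add, mulVec_sub A (xk - xstar), mulVec_smul, mulVec_smul,
      mulVec_sub A (xk - xstar)]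
  have hP : sqnorm P ≤ (1 - γ) * sqnorm E := by
    have hgain : γ * sqnorm E ≤ (E ⬝ᵥ w) ^ 2 / sqnorm w := by
      rw [hEw, neg_sq, dotProduct_comm]
      exact card_mul_sigma_ratio_mul_sqnorm_le sk τk A _ hres (Nat.cast_nonneg n)
        fun j hj => (Finset.mem_filter.mp hj).2
    rw [sqnorm_sub_proj]
    linarith
  calc sqnorm (A *ᵥ (xkp - xstar))
      ≤ (1 + 3 * β) * sqnorm P + 2 * β ^ 2 * sqnorm E + (2 * β ^ 2 + β) * sqnorm F :=
        hstep ▸ sqnorm_add_smul_sub_le (dotProduct_sub_proj_self E w) hβ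
    _ ≤ (1 + 3 * β) * ((1 - γ) * sqnorm E) + 2 * β ^ 2 * sqnorm E +
        (2 * β ^ 2 + β) * sqnorm F := by
      gcongr
    _ = (1 + 3 * β + 2 * β ^ 2 - (3 * β + 1) * γ) * sqnorm E + (2 * β ^ 2 + β) * sqnorm F := by
      ring

theorem stmt_14 {m n : ℕ} (A : Matrix (Fin m) (Fin n) ℝ) (hrank : A.rank = n)
    (b : Fin m → ℝ) (xstar : Fin n → ℝ)
    (hstar : (Aᵀ * A).mulVec xstar = Aᵀ.mulVec b)
    (β : ℝ) (hβ : 0 ≤ β) (xk xkm : Fin n → ℝ) :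
    let sk : Fin n → ℝ := Aᵀ.mulVec (b - A.mulVec xk)
    let τk : Finset (Fin n) := Finset.univ.filter fun j => (sk j) ^ 2 ≥ sqnorm sk / n
    let ηk : Fin n → ℝ := ∑ j ∈ τk, sk j • (Pi.single j 1 : Fin n → ℝ)
    let xkp : Fin n → ℝ := xk + (ηk ⬝ᵥ sk / sqnorm (A.mulVec ηk)) • ηk + β • (xk - xkm)
    let Aτ : Matrix (Fin m) ↥τk ℝ := A.submatrix id (fun j : ↥τk => (j : Fin n))
    sk ≠ 0 →
      sqnorm (A.mulVec (xkp - xstar)) ≤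
        (1 + 3 * β + 2 * β ^ 2 -
            (3 * β + 1) * ((τk.card : ℝ) * sigmaMin A ^ 2 / (n * sigmaMax Aτ ^ 2))) *
          sqnorm (A.mulVec (xk - xstar)) +
        (2 * β ^ 2 + β) * sqnorm (A.mulVec (xkm - xstar)) :=
  stmt_14_general A b xstar hstar β hβ xk xkm
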